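/- For r, s ≥ 1 and generic q, t, the residue at Q = q^r t^{-s} of Z_{∅,(r^s)}(Q,q,t), as a rational function of Q, equals G(r,s;q,t) := -q^r t^{-s} ∏_{-r ≤ i ≤ r-1, -s ≤ j ≤ s-1, (i,j)≠(0,0)} (1 - q^i t^{-j})^{-1}. -/

import Mathlib

open Finset Filter

/-- Length of column `j+1` of the Young diagram of `p` (rows 0-indexed). -/
noncomputable def conjP (p : ℕ → ℕ) (j : ℕ) : ℕ := Nat.card {i : ℕ | j < p i}

/-- The Nekrasov factor `N_{λ,μ}(Q)`; rows are 0-indexed, so `l i` is the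
`(i+1)`-st row of `λ`.  It equals
`∏_{(i,j)∈μ} (1 - Q q^{λ_i - j} t^{μ'_j - i + 1}) ·
 ∏_{(i,j)∈λ} (1 - Q q^{-μ_i + j - 1} t^{-λ'_j + i})` (1-indexed boxes). -/
noncomputable def Nfac (q t Q : ℂ) (l m : ℕ → ℕ) : ℂ :=
  (∏ᶠ i : ℕ, ∏ j ∈ Finset.range (m i),
    (1 - Q * q ^ ((l i : ℤ) - ((j : ℤ) + 1)) * t ^ ((conjP m j : ℤ) - (i : ℤ)))) *
  (∏ᶠ i : ℕ, ∏ j ∈ Finset.range (l i),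
    (1 - Q * q ^ (-(m i : ℤ) + (j : ℤ)) * t ^ (-(conjP l j : ℤ) + (i : ℤ) + 1)))

/-- The Nekrasov summand
`Z_{λ,μ}(Q,q,t) = 1/(N_{λ,λ}(1) N_{μ,μ}(1) N_{λ,μ}(Q) N_{μ,λ}(Q⁻¹))`. -/
noncomputable def Zlm (q t Q : ℂ) (l m : ℕ → ℕ) : ℂ :=
  1 / (Nfac q t 1 l l * Nfac q t 1 m m * Nfac q t Q l m * Nfac q t Q⁻¹ m l)

/-- `p : ℕ → ℕ` is a partition: antitone with finite support. -/
def IsPartition (p : ℕ → ℕ) : Prop :=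
  (∀ i j : ℕ, i ≤ j → p j ≤ p i) ∧ {i | p i ≠ 0}.Finite

/-- The rectangular partition `(r^s)`: `s` rows of length `r`. -/
def rect (r s : ℕ) : ℕ → ℕ := fun i => if i < s then r else 0

/-- The single-box partition `(1)`. -/
def oneBox : ℕ → ℕ := fun i => if i = 0 then 1 else 0

/-- The empty partition. -/
def emptyP : ℕ → ℕ := fun _ => 0

/-- `G(r,s;q,t) = -sgn(r) q^r t^{-s}
∏_{-|r| ≤ i ≤ |r|-1, -|s| ≤ j ≤ |s|-1, (i,j)≠(0,0)} (1 - q^i t^{-j})^{-1}`. -/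
noncomputable def Gfun (q t : ℂ) (r s : ℤ) : ℂ :=
  -(if 0 < r then (1 : ℂ) else -1) * q ^ r * t ^ (-s) *
    ∏ i ∈ Finset.Icc (-|r|) (|r| - 1), ∏ j ∈ Finset.Icc (-|s|) (|s| - 1),
      (if i = 0 ∧ j = 0 then 1 else (1 - q ^ i * t ^ (-j))⁻¹)

/-! For `λ = ∅` and `μ = (r^s)` every factor of the Nekrasov summand has the form
`1 - X q^a t^{-b}` with `(a, b)` running over one of four `r × s` rectangles.  The only factor
vanishing at `Q₀ = q^r t^{-s}` is the corner factor `1 - Q q^{-r} t^s = -(Q - Q₀)/Q₀` of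
`N_{∅,μ}(Q)`.  The remaining factors are continuous at `Q₀`, and there the rescalings by
`Q₀^{±1}` translate the rectangles of `N_{∅,μ}` and `N_{μ,∅}` so that, together with the two of
`N_{μ,μ}(1)`, they tile the box `[-r, r) × [-s, s)` punctured at the origin.  Genericity of
`q, t` makes the product over this punctured box nonzero. -/

section IntervalProducts

variable {M : Type*} [CommMonoid M]

lemma prod_Ico_eq_prod_range_add (f : ℤ → M) {a b : ℤ} {n : ℕ} (h : b = a + n) :
    ∏ x ∈ Ico a b, f x = ∏ k ∈ range n, f (a + k) := by
  subst h
  simp [Int.Ico_eq_finset_map, prod_map]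

lemma prod_Ico_eq_prod_range_sub (f : ℤ → M) {a b : ℤ} {n : ℕ} (h : b = a + n) :
    ∏ x ∈ Ico a b, f x = ∏ k ∈ range n, f (b - 1 - k) := by
  rw [prod_Ico_eq_prod_range_add f h, ← prod_range_reflect]
  refine prod_congr rfl fun k hk => ?_
  rw [mem_range] at hk
  congr 1
  omega

lemma finprod_prod_range_rect (f : ℕ → ℕ → M) (r s : ℕ) :
    ∏ᶠ i, ∏ j ∈ range (rect r s i), f i j = ∏ i ∈ range s, ∏ j ∈ range r, f i j := by
  rw [finprod_eq_prod_of_mulSupport_subset (s := range s)]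
  · exact prod_congr rfl fun i hi => by rw [rect, if_pos (mem_range.1 hi)]
  · intro i hi
    by_contra his
    simp [rect, show ¬ i < s by simpa using his] at hi

end IntervalProducts

lemma conjP_rect {r j : ℕ} (s : ℕ) (hj : j < r) : conjP (rect r s) j = s := by
  have : {i : ℕ | j < rect r s i} = Set.Iio s := by
    ext i
    simp only [rect, Set.mem_ofPred_eq, Set.mem_Iio]
    split_ifs <;> omega
  simp [conjP, this]

noncomputable def boxProd (q t X : ℂ) (S : Finset (ℤ × ℤ)) : ℂ :=
  ∏ p ∈ S, (1 - X * q ^ p.1 * t ^ (-p.2))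

section BoxProd

variable {q t : ℂ}

lemma boxProd_shift (hq : q ≠ 0) (ht : t ≠ 0) (c d : ℤ) (S : Finset (ℤ × ℤ)) :
    boxProd q t (q ^ c * t ^ (-d)) S =
      boxProd q t 1 (S.map (Equiv.addRight (c, d)).toEmbedding) := by
  simp only [boxProd, prod_map, Equiv.coe_toEmbedding, Equiv.coe_addRight, Prod.fst_add,
    Prod.snd_add, one_mul, neg_add, zpow_add₀ hq, zpow_add₀ ht]
  exact prod_congr rfl fun _ _ => by ring

lemma boxProd_quadrants (X : ℂ) (r s : ℕ) :
    boxProd q t X (Ico 0 (r : ℤ) ×ˢ Ico (-(s : ℤ)) 0) *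
        boxProd q t X (Ico (-(r : ℤ)) 0 ×ˢ Ico 0 (s : ℤ)) *
        boxProd q t X ((Ico 0 (r : ℤ) ×ˢ Ico 0 (s : ℤ)).erase (0, 0)) *
        boxProd q t X (Ico (-(r : ℤ)) 0 ×ˢ Ico (-(s : ℤ)) 0) =
      boxProd q t X ((Ico (-(r : ℤ)) r ×ˢ Ico (-(s : ℤ)) s).erase (0, 0)) := by
  simp only [boxProd]
  rw [← prod_union, ← prod_union, ← prod_union]
  · congr 1
    ext ⟨a, b⟩
    simp only [mem_union, mem_erase, mem_product, mem_Ico, ne_eq, Prod.mk.injEq]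
    omega
  all_goals
    simp only [disjoint_left, mem_union, mem_erase, mem_product, mem_Ico]
    omega

lemma boxProd_one_ne_zero (hgen : ∀ a b : ℤ, q ^ a * t ^ b = 1 → a = 0 ∧ b = 0)
    {S : Finset (ℤ × ℤ)} (hS : (0, 0) ∉ S) : boxProd q t 1 S ≠ 0 := by
  refine prod_ne_zero_iff.2 fun p hp hzero => hS ?_
  obtain ⟨ha, hb⟩ := hgen p.1 (-p.2) (by linear_combination -hzero)
  rwa [← show p = (0, 0) from Prod.ext ha (neg_eq_zero.1 hb)]

end BoxProd

section Nekrasov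

variable (q t Q : ℂ) (r s : ℕ)

lemma Nfac_emptyP_emptyP : Nfac q t Q emptyP emptyP = 1 := by
  simp [Nfac, emptyP]

lemma Nfac_emptyP_rect :
    Nfac q t Q emptyP (rect r s) = boxProd q t Q (Ico (-(r : ℤ)) 0 ×ˢ Ico (-(s : ℤ)) 0) := by
  simp only [Nfac, emptyP, range_zero, prod_empty, finprod_one, mul_one, finprod_prod_range_rect,
    boxProd, prod_product_right]
  rw [prod_Ico_eq_prod_range_add _ (by simp : (0 : ℤ) = -s + s)]
  refine prod_congr rfl fun i _ => ?_
  rw [prod_Ico_eq_prod_range_sub _ (by simp : (0 : ℤ) = -r + r)]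
  refine prod_congr rfl fun j hj => ?_
  rw [conjP_rect s (mem_range.1 hj)]
  ring_nf

lemma Nfac_rect_emptyP :
    Nfac q t Q (rect r s) emptyP = boxProd q t Q (Ico 0 (r : ℤ) ×ˢ Ico 0 (s : ℤ)) := by
  simp only [Nfac, emptyP, range_zero, prod_empty, finprod_one, one_mul, finprod_prod_range_rect,
    boxProd, prod_product_right]
  rw [prod_Ico_eq_prod_range_sub _ (by simp : (s : ℤ) = 0 + s)]
  refine prod_congr rfl fun i _ => ?_
  rw [prod_Ico_eq_prod_range_add _ (by simp : (r : ℤ) = 0 + r)]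
  refine prod_congr rfl fun j hj => ?_
  rw [conjP_rect s (mem_range.1 hj)]
  ring_nf

lemma Nfac_rect_rect :
    Nfac q t Q (rect r s) (rect r s) =
      boxProd q t Q (Ico 0 (r : ℤ) ×ˢ Ico (-(s : ℤ)) 0) *
        boxProd q t Q (Ico (-(r : ℤ)) 0 ×ˢ Ico 0 (s : ℤ)) := by
  simp only [Nfac, finprod_prod_range_rect, boxProd, prod_product_right]
  congr 1
  · rw [prod_Ico_eq_prod_range_add _ (by simp : (0 : ℤ) = -s + s)]
    refine prod_congr rfl fun i hi => ?_
    rw [prod_Ico_eq_prod_range_sub _ (by simp : (r : ℤ) = 0 + r)]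
    refine prod_congr rfl fun j hj => ?_
    rw [conjP_rect s (mem_range.1 hj), rect, if_pos (mem_range.1 hi)]
    ring_nf
  · rw [prod_Ico_eq_prod_range_sub _ (by simp : (s : ℤ) = 0 + s)]
    refine prod_congr rfl fun i hi => ?_
    rw [prod_Ico_eq_prod_range_add _ (by simp : (0 : ℤ) = -r + r)]
    refine prod_congr rfl fun j hj => ?_
    rw [conjP_rect s (mem_range.1 hj), rect, if_pos (mem_range.1 hi)]
    ring_nf

variable {r s} in
lemma Nfac_emptyP_rect_eq_mul (hr : 1 ≤ r) (hs : 1 ≤ s) :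
    Nfac q t Q emptyP (rect r s) = (1 - Q * q ^ (-(r : ℤ)) * t ^ (s : ℤ)) *
      boxProd q t Q ((Ico (-(r : ℤ)) 0 ×ˢ Ico (-(s : ℤ)) 0).erase (-r, -s)) := by
  rw [Nfac_emptyP_rect, boxProd, boxProd, ← mul_prod_erase _ _ (a := (-(r : ℤ), -(s : ℤ)))]
  · rw [neg_neg]
  · simp only [mem_product, mem_Ico]
    omega

end Nekrasov

lemma Gfun_natCast (q t : ℂ) {r : ℕ} (hr : 0 < r) (s : ℕ) :
    Gfun q t r s = -(q ^ (r : ℤ) * t ^ (-(s : ℤ))) /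
      boxProd q t 1 ((Ico (-(r : ℤ)) r ×ˢ Ico (-(s : ℤ)) s).erase (0, 0)) := by
  simp only [Gfun, Nat.abs_cast, Int.natCast_pos.2 hr, if_pos, Icc_sub_one_right_eq_Ico,
    ← prod_product', boxProd, one_mul]
  rw [div_eq_mul_inv, ← prod_inv_distrib, ← prod_erase _ (a := (0, 0))
    (f := fun p : ℤ × ℤ => if p.1 = 0 ∧ p.2 = 0 then (1 : ℂ) else (1 - q ^ p.1 * t ^ (-p.2))⁻¹)
    (by simp), neg_one_mul, neg_mul]
  congr 1
  exact prod_congr rfl fun p hp => if_neg fun h => (mem_erase.1 hp).1 (Prod.ext h.1 h.2)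

/-- The residue of `Z_{∅,(r^s)}(Q,q,t)` at the simple pole `Q = q^r t^{-s}`,
computed as `lim_{Q→Q₀}(Q-Q₀)·Z_{∅,(r^s)}(Q)`, equals `G(r,s;q,t)`. -/
theorem stmt_6 (q t : ℂ) (hq : q ≠ 0) (ht : t ≠ 0)
    (hgen : ∀ a b : ℤ, q ^ a * t ^ b = 1 → a = 0 ∧ b = 0)
    (r s : ℕ) (hr : 1 ≤ r) (hs : 1 ≤ s) :
    Filter.Tendsto
      (fun Q : ℂ => (Q - q ^ (r : ℤ) * t ^ (-(s : ℤ))) * Zlm q t Q emptyP (rect r s))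
      (nhdsWithin (q ^ (r : ℤ) * t ^ (-(s : ℤ))) {q ^ (r : ℤ) * t ^ (-(s : ℤ))}ᶜ)
      (nhds (Gfun q t (r : ℤ) (s : ℤ))) := by
  set Q₀ := q ^ (r : ℤ) * t ^ (-(s : ℤ))
  have hQ₀ : Q₀ ≠ 0 := mul_ne_zero (zpow_ne_zero _ hq) (zpow_ne_zero _ ht)
  have hQ₀inv : Q₀⁻¹ = q ^ (-(r : ℤ)) * t ^ (-(-(s : ℤ))) := by
    simp only [Q₀, mul_inv, zpow_neg, inv_inv]
  set D : ℂ → ℂ := fun Q => Nfac q t 1 (rect r s) (rect r s) *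
    boxProd q t Q ((Ico (-(r : ℤ)) 0 ×ˢ Ico (-(s : ℤ)) 0).erase (-r, -s)) *
    Nfac q t Q⁻¹ (rect r s) emptyP
  have hresidue : ∀ Q ≠ Q₀, (Q - Q₀) * Zlm q t Q emptyP (rect r s) = -Q₀ / D Q := by
    intro Q hQ
    have hpole : 1 - Q * q ^ (-(r : ℤ)) * t ^ (s : ℤ) = -(Q - Q₀) / Q₀ := by
      rw [← neg_neg (s : ℤ), mul_assoc, ← hQ₀inv]
      field_simp
      ring
    have hQQ₀ : Q - Q₀ ≠ 0 := sub_ne_zero.2 hQ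
    rw [Zlm, Nfac_emptyP_emptyP, Nfac_emptyP_rect_eq_mul _ _ _ hr hs, hpole]
    simp only [D]
    field_simp
  have hD : ContinuousAt D Q₀ := by
    simp only [D, boxProd, Nfac_rect_emptyP]
    fun_prop (disch := exact hQ₀)
  have hDQ₀ : D Q₀ = boxProd q t 1 ((Ico (-(r : ℤ)) r ×ˢ Ico (-(s : ℤ)) s).erase (0, 0)) := by
    simp only [D, Nfac_rect_rect, Nfac_rect_emptyP, hQ₀inv, Q₀, boxProd_shift hq ht]
    rw [← boxProd_quadrants]
    congr 3 <;> ext ⟨a, b⟩ <;>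
      simp only [map_erase, mem_erase, mem_map_equiv, Equiv.addRight_symm, Prod.neg_mk,
        Equiv.coe_toEmbedding, Equiv.coe_addRight, Prod.mk_add_mk, mem_product, mem_Ico, ne_eq,
        Prod.mk.injEq] <;>
      omega
  rw [Gfun_natCast q t hr, ← hDQ₀]
  refine ((continuousAt_const.div hD ?_).tendsto.mono_left nhdsWithin_le_nhds).congr'
    (eventually_nhdsWithin_of_forall fun Q hQ => (hresidue Q hQ).symm)
  rw [hDQ₀]
  exact boxProd_one_ne_zero hgen (by simp)
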